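/- arXiv:math/0605166 — 2 statements merged into one kernel-verified Lean document; each statement's English description precedes it below -/
import Mathlib

section
/- Let λ and μ be partitions of k, and for n ≥ k + max(λ₁, μ₁) set D_n = n!/((n−k)!·∏ᵢ λᵢ!). Then the real sequence K_{(n−k,μ),(n−k,λ)}·dim (n−k,μ) / D_n tends to K_{μ,λ}·dim μ·(∏ᵢ λᵢ!)/k! as n → ∞. -/
open scoped BigOperators

/-- The Kostka number `K_{μ,w}`: the number of semistandard Young tableaux of shape `μ` and
weight `w`, i.e. having exactly `w i` entries equal to `i` for each `i`. -/
noncomputable def kostka (μ : YoungDiagram) (w : ℕ → ℕ) : ℕ :=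
  Nat.card {T : SemistandardYoungTableau μ //
    ∀ i : ℕ, (μ.cells.filter fun c => T c.1 c.2 = i).card = w i}

/-- The number of saturated chains `μ = t₀ ⊂ t₁ ⊂ ⋯ ⊂ t_m = ν` of Young diagrams in which each
`t_{i+1}` is obtained from `t_i` by adding one cell (the number of standard skew tableaux of
shape `ν/μ`). -/
noncomputable def chainCount (μ ν : YoungDiagram) (m : ℕ) : ℕ :=
  Nat.card {t : Fin (m + 1) → YoungDiagram //
    t 0 = μ ∧ t (Fin.last m) = ν ∧
    ∀ i : Fin m, t i.castSucc ≤ t i.succ ∧ (t i.succ).card = (t i.castSucc).card + 1}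

/-- `dimSYT μ` is the number of standard Young tableaux of shape `μ`: the number of saturated
chains from the empty diagram to `μ` adding one cell at a time. -/
noncomputable def dimSYT (μ : YoungDiagram) : ℕ :=
  chainCount ⊥ μ μ.card

/-- The two-row Young diagram `(a, b)` (for `b ≤ a`). -/
def twoRow (a b : ℕ) : YoungDiagram :=
  YoungDiagram.ofRowLens [a, min a b] (by simp [List.sortedGE_iff_pairwise])

/-- The dominance order on Young diagrams: `dominates μ ν` means `μ ⊵ ν`, i.e. every partial
sum of row lengths of `μ` is at least the corresponding partial sum for `ν`. -/
def dominates (μ ν : YoungDiagram) : Prop :=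
  ∀ m : ℕ, ∑ i ∈ Finset.range m, ν.rowLen i ≤ ∑ i ∈ Finset.range m, μ.rowLen i

/-!
In a semistandard tableau the entries of row `i` are at least `i`, so a tableau of shape
`(m, μ)` with `m` zeros has its whole first row equal to `0`, and removing that row and subtracting
one from every entry identifies such tableaux with those of shape `μ`: the Kostka factor is
constant, `K_{(m,μ),(m,λ)} = K_{μ,λ}`.

A standard tableau of shape `(m, μ)`, with `n = m + k` cells, is determined by the set of the `k`
steps at which a cell is added below the first row together with the standard tableau of `μ`
formed by these cells, which gives `dim (m, μ) ≤ C(n, k) · dim μ`. Conversely, if all these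
steps come after the first `μ₁` steps, the first row is always long enough, so every such pair
occurs and `C(n - μ₁, k) · dim μ ≤ dim (m, μ)`. Both bounds are asymptotic to
`n^k / k! · dim μ`, while `D_n = n (n - 1) ⋯ (n - k + 1) / ∏ᵢ λᵢ!`.
-/

namespace YoungDiagram

theorem rowLen_le_rowLen_zero_of_mem_rowLens {μ : YoungDiagram} {x : ℕ} (hx : x ∈ μ.rowLens) :
    x ≤ μ.rowLen 0 := by
  obtain ⟨i, -, rfl⟩ := List.mem_map.mp hx
  exact μ.rowLen_anti 0 i i.zero_le

/-- The diagram `(m, σ)`; its first row is lengthened to `σ.rowLen 0` when `m` is too short. -/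
def cons (m : ℕ) (σ : YoungDiagram) : YoungDiagram :=
  ofRowLens (max m (σ.rowLen 0) :: σ.rowLens) <| by
    rw [List.sortedGE_iff_pairwise, List.pairwise_cons, ← List.sortedGE_iff_pairwise]
    exact ⟨fun x hx => (rowLen_le_rowLen_zero_of_mem_rowLens hx).trans (le_max_right _ _),
      σ.rowLens_sorted⟩

def tail (μ : YoungDiagram) : YoungDiagram :=
  ofRowLens μ.rowLens.tail (List.sortedGE_iff_pairwise.mpr μ.rowLens_sorted.pairwise.tail)

@[simp] theorem mem_cons_zero {m : ℕ} {σ : YoungDiagram} {j : ℕ} :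
    (0, j) ∈ cons m σ ↔ j < max m (σ.rowLen 0) := by
  simp [cons, mem_ofRowLens]

@[simp] theorem mem_cons_succ {m : ℕ} {σ : YoungDiagram} {i j : ℕ} :
    (i + 1, j) ∈ cons m σ ↔ (i, j) ∈ σ := by
  conv_rhs => rw [← ofRowLens_to_rowLens_eq_self (μ := σ)]
  simp [cons, mem_ofRowLens]

@[simp] theorem mem_tail {μ : YoungDiagram} {i j : ℕ} :
    (i, j) ∈ tail μ ↔ (i + 1, j) ∈ μ := by
  conv_rhs => rw [← ofRowLens_to_rowLens_eq_self (μ := μ)]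
  simp only [tail, mem_ofRowLens, List.length_tail, List.getElem_tail, length_rowLens,
    get_rowLens]
  have := μ.colLen_anti 0 j j.zero_le
  have := @mem_iff_lt_colLen μ (i + 1) j
  rw [mem_iff_lt_rowLen] at this
  constructor <;> rintro ⟨_, _⟩ <;> exact ⟨by omega, by assumption⟩

theorem rowLen_eq_of_forall_mem_iff {μ : YoungDiagram} {i m : ℕ}
    (h : ∀ j, (i, j) ∈ μ ↔ j < m) : μ.rowLen i = m :=
  eq_of_forall_lt_iff fun j => by rw [← mem_iff_lt_rowLen, h]

@[simp] theorem rowLen_cons_zero {m : ℕ} {σ : YoungDiagram} :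
    (cons m σ).rowLen 0 = max m (σ.rowLen 0) :=
  rowLen_eq_of_forall_mem_iff fun _ => mem_cons_zero

@[simp] theorem rowLen_cons_succ {m : ℕ} {σ : YoungDiagram} {i : ℕ} :
    (cons m σ).rowLen (i + 1) = σ.rowLen i :=
  rowLen_eq_of_forall_mem_iff fun _ => by rw [mem_cons_succ, mem_iff_lt_rowLen]

@[simp] theorem rowLen_tail {μ : YoungDiagram} {i : ℕ} :
    (tail μ).rowLen i = μ.rowLen (i + 1) :=
  rowLen_eq_of_forall_mem_iff fun _ => by rw [mem_tail, mem_iff_lt_rowLen]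

@[simp] theorem rowLen_bot (i : ℕ) : (⊥ : YoungDiagram).rowLen i = 0 :=
  rowLen_eq_of_forall_mem_iff fun _ => by simp [notMem_bot]

theorem cells_cons (m : ℕ) (σ : YoungDiagram) :
    (cons m σ).cells = {0} ×ˢ Finset.range (max m (σ.rowLen 0)) ∪
      σ.cells.map (.prodMap ⟨_, Nat.succ_injective⟩ (.refl ℕ)) := by
  change YoungDiagram.cellsOfRowLens (_ :: σ.rowLens) = _
  rw [YoungDiagram.cellsOfRowLens, ← congrArg cells (ofRowLens_to_rowLens_eq_self (μ := σ))]
  rfl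

@[simp] theorem card_cons (m : ℕ) (σ : YoungDiagram) :
    (cons m σ).card = max m (σ.rowLen 0) + σ.card := by
  rw [YoungDiagram.card, cells_cons, Finset.card_union_of_disjoint, Finset.card_map]
  · simp
  · simp [Finset.disjoint_left]

theorem ext_of_rowLen_zero_of_tail {μ ν : YoungDiagram} (h₀ : μ.rowLen 0 = ν.rowLen 0)
    (h : tail μ = tail ν) : μ = ν := by
  ext ⟨_ | i, j⟩
  · simp only [mem_cells, mem_iff_lt_rowLen, h₀]
  · simp only [mem_cells, ← mem_tail, h]

theorem cons_rowLen_zero_tail (μ : YoungDiagram) : cons (μ.rowLen 0) (tail μ) = μ :=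
  ext_of_rowLen_zero_of_tail (by simp [μ.rowLen_anti 0 1 zero_le_one]) (by ext ⟨i, j⟩; simp)

@[simp] theorem tail_cons (m : ℕ) (σ : YoungDiagram) : tail (cons m σ) = σ := by
  ext ⟨i, j⟩; simp

@[simp] theorem tail_bot : tail ⊥ = ⊥ := by
  ext ⟨i, j⟩; simp [notMem_bot]

@[simp] theorem cons_zero_bot : cons 0 ⊥ = ⊥ :=
  ext_of_rowLen_zero_of_tail (by simp) (by simp)

theorem card_eq_rowLen_zero_add_card_tail (μ : YoungDiagram) :
    μ.card = μ.rowLen 0 + (tail μ).card := by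
  conv_lhs => rw [← cons_rowLen_zero_tail μ]
  simp [μ.rowLen_anti 0 1 zero_le_one]

theorem rowLen_mono {μ ν : YoungDiagram} (h : μ ≤ ν) (i : ℕ) :
    μ.rowLen i ≤ ν.rowLen i :=
  le_of_forall_lt fun _ hj => mem_iff_lt_rowLen.mp (h (mem_iff_lt_rowLen.mpr hj))

theorem tail_mono : Monotone tail := fun _ _ h ⟨_, _⟩ hc => mem_tail.mpr (h (mem_tail.mp hc))

theorem cons_mono {m m' : ℕ} {σ σ' : YoungDiagram} (hm : m ≤ m') (hσ : σ ≤ σ') :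
    cons m σ ≤ cons m' σ' := by
  have h₀ := rowLen_mono hσ 0
  rintro ⟨_ | i, j⟩ hc
  · simp only [mem_cons_zero] at hc ⊢; omega
  · exact mem_cons_succ.mpr (hσ (mem_cons_succ.mp hc))

end YoungDiagram

namespace SemistandardYoungTableau

open YoungDiagram

variable {μ : YoungDiagram}

/-- `kostka μ w` counts the tableaux `T` with `T.weight = w`. -/
def weight (T : SemistandardYoungTableau μ) (v : ℕ) : ℕ :=
  (μ.cells.filter fun c => T c.1 c.2 = v).card

theorem le_apply (T : SemistandardYoungTableau μ) {i j : ℕ} (h : (i, j) ∈ μ) :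
    i ≤ T i j := by
  induction i with
  | zero => exact Nat.zero_le _
  | succ i ih =>
    have := T.col_strict (Nat.lt_add_one i) h
    have := ih (μ.up_left_mem (Nat.le_succ i) le_rfl h)
    omega

theorem weight_zero_eq_rowLen_zero_iff (T : SemistandardYoungTableau μ) :
    T.weight 0 = μ.rowLen 0 ↔ ∀ j, T 0 j = 0 := by
  have hsub : (μ.cells.filter fun c => T c.1 c.2 = 0) ⊆ μ.row 0 := fun c hc => by
    obtain ⟨hc, hT⟩ := Finset.mem_filter.mp hc
    rw [mem_cells] at hc
    exact mem_row_iff.mpr ⟨hc, by have := T.le_apply hc; omega⟩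
  rw [weight, rowLen_eq_card]
  constructor
  · intro h j
    by_cases hj : (0, j) ∈ μ
    · have hj : (0, j) ∈ μ.row 0 := mk_mem_row_iff.mpr hj
      rw [← Finset.eq_of_subset_of_card_le hsub h.ge] at hj
      exact (Finset.mem_filter.mp hj).2
    · exact T.zeros hj
  · intro h
    congr 1
    refine hsub.antisymm fun ⟨i, j⟩ hc => ?_
    obtain ⟨hc, rfl : i = 0⟩ := mem_row_iff.mp hc
    exact Finset.mem_filter.mpr ⟨(mem_cells _).mpr hc, h _⟩

variable {m : ℕ} {σ : YoungDiagram}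

def dropFirstRow (T : SemistandardYoungTableau (cons m σ)) : SemistandardYoungTableau σ where
  entry i j := T (i + 1) j - 1
  row_weak' hj hc := Nat.sub_le_sub_right (T.row_weak hj (mem_cons_succ.mpr hc)) 1
  col_strict' {i₁ _ j} hi hc := by
    have := T.col_strict (Nat.add_lt_add_right hi 1) (mem_cons_succ.mpr hc)
    have := T.le_apply (mem_cons_succ.mpr (σ.up_left_mem hi.le le_rfl hc) : (i₁ + 1, j) ∈ _)
    show T (i₁ + 1) j - 1 < _ - 1
    omega
  zeros' hc := by simp [T.zeros (mt mem_cons_succ.mp hc)]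

@[simp] theorem dropFirstRow_apply (T : SemistandardYoungTableau (cons m σ)) (i j : ℕ) :
    T.dropFirstRow i j = T (i + 1) j - 1 := rfl

variable (m) in
def consZeroRow (T : SemistandardYoungTableau σ) : SemistandardYoungTableau (cons m σ) where
  entry
    | 0, _ => 0
    | i + 1, j => if (i, j) ∈ σ then T i j + 1 else 0
  row_weak' {i _ _} hj hc := by
    cases i with
    | zero => exact le_rfl
    | succ i =>
      have hc := mem_cons_succ.mp hc
      simp only [hc, σ.up_left_mem le_rfl hj.le hc, if_true]
      exact Nat.succ_le_succ (T.row_weak hj hc)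
  col_strict' {i₁ i₂ _} hi hc := by
    obtain ⟨i₂, rfl⟩ := Nat.exists_eq_add_one_of_ne_zero (Nat.ne_zero_of_lt hi)
    have hc := mem_cons_succ.mp hc
    cases i₁ with
    | zero => simp only [hc, if_true]; exact Nat.succ_pos _
    | succ i₁ =>
      have hi := Nat.lt_of_succ_lt_succ hi
      simp only [hc, σ.up_left_mem hi.le le_rfl hc, if_true]
      exact Nat.succ_lt_succ (T.col_strict hi hc)
  zeros' {i _} hc := by
    cases i with
    | zero => rfl
    | succ i => exact if_neg (mt mem_cons_succ.mpr hc)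

@[simp] theorem consZeroRow_apply_zero (T : SemistandardYoungTableau σ) (j : ℕ) :
    T.consZeroRow m 0 j = 0 := rfl

@[simp] theorem consZeroRow_apply_succ (T : SemistandardYoungTableau σ) (i j : ℕ) :
    T.consZeroRow m (i + 1) j = if (i, j) ∈ σ then T i j + 1 else 0 := rfl

variable (m σ) in
def firstRowZeroEquiv :
    {T : SemistandardYoungTableau (cons m σ) // ∀ j, T 0 j = 0} ≃
      SemistandardYoungTableau σ where
  toFun T := T.1.dropFirstRow
  invFun T := ⟨T.consZeroRow m, consZeroRow_apply_zero T⟩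
  left_inv := fun ⟨T, hT⟩ => Subtype.ext <| ext fun i j => by
    cases i with
    | zero => simp [hT]
    | succ i =>
      by_cases hc : (i, j) ∈ σ
      · have := T.le_apply (mem_cons_succ.mpr hc)
        simp only [consZeroRow_apply_succ, dropFirstRow_apply, hc, if_true]
        omega
      · simp [hc, T.zeros (mt mem_cons_succ.mp hc)]
  right_inv T := ext fun i j => by
    by_cases hc : (i, j) ∈ σ <;> simp [hc, T.zeros]

theorem weight_succ_eq_weight_dropFirstRow (T : SemistandardYoungTableau (cons m σ))
    (hT : ∀ j, T 0 j = 0) (v : ℕ) : T.weight (v + 1) = T.dropFirstRow.weight v := by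
  have hrow :
      ({0} ×ˢ Finset.range (max m (σ.rowLen 0))).filter (fun c => T c.1 c.2 = v + 1) = ∅ :=
    Finset.filter_eq_empty_iff.mpr (by simp [hT])
  rw [weight, cells_cons, Finset.filter_union, hrow, Finset.empty_union, Finset.filter_map,
    Finset.card_map, weight]
  refine congrArg _ (Finset.filter_congr fun ⟨i, j⟩ hc => ?_)
  have := T.le_apply (mem_cons_succ.mpr ((mem_cells _).mp hc) : (i + 1, j) ∈ _)
  change T (i + 1) j = v + 1 ↔ T (i + 1) j - 1 = v
  omega

end SemistandardYoungTableau

open SemistandardYoungTableau in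
theorem kostka_cons {m : ℕ} {σ : YoungDiagram} (hm : σ.rowLen 0 ≤ m) {w : ℕ → ℕ}
    (hw : w 0 = m) : kostka (YoungDiagram.cons m σ) w = kostka σ (fun v => w (v + 1)) := by
  let e := firstRowZeroEquiv m σ
  let P (T' : SemistandardYoungTableau σ) : Prop := ∀ v, T'.weight v = w (v + 1)
  have key (T : SemistandardYoungTableau (YoungDiagram.cons m σ)) :
      (∀ v, T.weight v = w v) ↔ ∃ hT : ∀ j, T 0 j = 0, P (e ⟨T, hT⟩) := by
    have hw : w 0 = (YoungDiagram.cons m σ).rowLen 0 := by simp [hw, hm]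
    rw [← Nat.and_forall_add_one, hw, weight_zero_eq_rowLen_zero_iff]
    constructor
    · rintro ⟨hT, h⟩
      exact ⟨hT, fun v => (weight_succ_eq_weight_dropFirstRow T hT v).symm.trans (h v)⟩
    · rintro ⟨hT, h⟩
      exact ⟨hT, fun v => (weight_succ_eq_weight_dropFirstRow T hT v).trans (h v)⟩
  exact Nat.card_congr <| (Equiv.subtypeEquivRight key).trans <|
    (Equiv.subtypeSubtypeEquivSubtypeExists _ (P ∘ e)).symm.trans <|
      e.subtypeEquiv fun _ => Iff.rfl

open YoungDiagram Finset

theorem Nat.exists_eq_of_le_of_map_succ_le {g : ℕ → ℕ} (hg : ∀ i, g (i + 1) ≤ g i + 1)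
    {n j : ℕ} (h₀ : g 0 ≤ j) (hj : j ≤ g n) : ∃ i, g i = j := by
  induction n with
  | zero => exact ⟨0, le_antisymm h₀ hj⟩
  | succ n ih =>
    rcases le_or_gt j (g n) with h | h
    · exact ih h
    · exact ⟨n + 1, by have := hg n; omega⟩

def countBelow (B : Finset ℕ) (i : ℕ) : ℕ := #{b ∈ B | b < i}

theorem countBelow_succ (B : Finset ℕ) (i : ℕ) :
    countBelow B (i + 1) = countBelow B i + if i ∈ B then 1 else 0 := by
  have : {b ∈ B | b < i + 1} = {b ∈ B | b < i} ∪ {b ∈ B | b = i} := by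
    ext; simp only [mem_filter, mem_union, ← and_or_left, Nat.lt_add_one_iff_lt_or_eq]
  rw [countBelow, this, card_union_of_disjoint (disjoint_filter.mpr fun _ _ h => h.ne),
    filter_eq', countBelow]
  split_ifs <;> simp

theorem countBelow_of_subset_range {B : Finset ℕ} {n i : ℕ} (hB : B ⊆ range n)
    (hi : n ≤ i) : countBelow B i = #B :=
  congrArg card (filter_true_of_mem fun _ hb => (mem_range.mp (hB hb)).trans_le hi)

theorem countBelow_le_sub {B : Finset ℕ} {c n : ℕ} (hB : B ⊆ Ico c n) (i : ℕ) :
    countBelow B i ≤ i - c :=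
  (card_le_card fun b hb => by
    have := mem_Ico.mp (hB (mem_filter.mp hb).1)
    exact mem_Ico.mpr ⟨this.1, (mem_filter.mp hb).2⟩).trans (Nat.card_Ico c i).le

theorem countBelow_le_card (B : Finset ℕ) (i : ℕ) : countBelow B i ≤ #B :=
  card_le_card (filter_subset _ _)

theorem countBelow_mono (B : Finset ℕ) : Monotone (countBelow B) :=
  monotone_nat_of_le_succ fun i => by rw [countBelow_succ]; exact Nat.le_add_right _ _

/-- The chains counted by `chainCount ⊥ ν n`, indexed by `ℕ` (and constant from time `n` on) to
avoid `Fin` arithmetic. -/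
structure IsSaturatedChain (ν : YoungDiagram) (n : ℕ) (T : ℕ → YoungDiagram) : Prop where
  zero : T 0 = ⊥
  eq_of_le ⦃i : ℕ⦄ : n ≤ i → T i = ν
  le_succ ⦃i : ℕ⦄ : i < n → T i ≤ T (i + 1)
  card_succ ⦃i : ℕ⦄ : i < n → (T (i + 1)).card = (T i).card + 1

def chainEquivIsSaturatedChain (ν : YoungDiagram) (n : ℕ) :
    {t : Fin (n + 1) → YoungDiagram // t 0 = ⊥ ∧ t (Fin.last n) = ν ∧
      ∀ i : Fin n, t i.castSucc ≤ t i.succ ∧ (t i.succ).card = (t i.castSucc).card + 1} ≃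
    {T : ℕ → YoungDiagram // IsSaturatedChain ν n T} where
  toFun t := ⟨fun i => t.1 (Fin.clamp i n), by
    obtain ⟨t, h₀, hn, hstep⟩ := t
    have hclamp {i : ℕ} (hi : i < n) : Fin.clamp i n = (⟨i, hi⟩ : Fin n).castSucc ∧
        Fin.clamp (i + 1) n = (⟨i, hi⟩ : Fin n).succ :=
      ⟨Fin.ext (by simp; omega), Fin.ext (by simp; omega)⟩
    refine ⟨h₀, fun i hi => ?_, fun i hi => ?_, fun i hi => ?_⟩
    · rwa [Fin.clamp_eq_last _ _ hi]
    · rw [(hclamp hi).1, (hclamp hi).2]; exact (hstep _).1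
    · rw [(hclamp hi).1, (hclamp hi).2]; exact (hstep _).2⟩
  invFun T := ⟨fun i => T.1 i, T.2.zero, T.2.eq_of_le le_rfl,
    fun i => ⟨T.2.le_succ i.2, T.2.card_succ i.2⟩⟩
  left_inv t := Subtype.ext <| funext fun i =>
    congrArg t.1 (Fin.ext (Nat.min_eq_left (Nat.le_of_lt_succ i.2)))
  right_inv T := Subtype.ext <| funext fun i => by
    rcases le_total i n with hi | hi
    · simp [Nat.min_eq_left hi]
    · simp [Nat.min_eq_right hi, T.2.eq_of_le hi, T.2.eq_of_le le_rfl]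

theorem chainCount_bot_eq_card (ν : YoungDiagram) (n : ℕ) :
    chainCount ⊥ ν n = Nat.card {T : ℕ → YoungDiagram // IsSaturatedChain ν n T} :=
  Nat.card_congr (chainEquivIsSaturatedChain ν n)

def tailCard (T : ℕ → YoungDiagram) (i : ℕ) : ℕ := (tail (T i)).card

def growthSet (T : ℕ → YoungDiagram) (n : ℕ) : Finset ℕ :=
  {i ∈ range n | tailCard T (i + 1) = tailCard T i + 1}

noncomputable def lowerChain (k : ℕ) (T : ℕ → YoungDiagram) (j : ℕ) : YoungDiagram :=
  tail (T (Classical.epsilon fun i => tailCard T i = min j k))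

namespace IsSaturatedChain

variable {ν : YoungDiagram} {n : ℕ} {T : ℕ → YoungDiagram}

protected theorem monotone (h : IsSaturatedChain ν n T) : Monotone T :=
  monotone_nat_of_le_succ fun i => by
    rcases lt_or_ge i n with hi | hi
    · exact h.le_succ hi
    · rw [h.eq_of_le hi, h.eq_of_le (hi.trans i.le_succ)]

theorem le (h : IsSaturatedChain ν n T) (i : ℕ) : T i ≤ ν := by
  rw [← h.eq_of_le (le_max_right i n)]
  exact h.monotone (le_max_left i n)

theorem card_eq (h : IsSaturatedChain ν n T) (i : ℕ) : (T i).card = min i n := by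
  induction i with
  | zero => simp [h.zero]
  | succ i ih =>
    rcases lt_or_ge i n with hi | hi
    · rw [h.card_succ hi, ih]; omega
    · rw [h.eq_of_le (hi.trans i.le_succ), ← h.eq_of_le hi, ih]; omega

theorem tailCard_zero (h : IsSaturatedChain ν n T) : tailCard T 0 = 0 := by
  simp [tailCard, h.zero]

theorem tailCard_of_le (h : IsSaturatedChain ν n T) {i : ℕ} (hi : n ≤ i) :
    tailCard T i = (tail ν).card := by
  rw [tailCard, h.eq_of_le hi]

theorem tailCard_mono (h : IsSaturatedChain ν n T) : Monotone (tailCard T) := fun _ _ hij =>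
  card_le_card (cells_subset_iff.mpr (tail_mono (h.monotone hij)))

theorem tailCard_le (h : IsSaturatedChain ν n T) (i : ℕ) : tailCard T i ≤ (tail ν).card :=
  card_le_card (cells_subset_iff.mpr (tail_mono (h.le i)))

theorem rowLen_zero_add_tailCard (h : IsSaturatedChain ν n T) (i : ℕ) :
    (T i).rowLen 0 + tailCard T i = min i n :=
  (card_eq_rowLen_zero_add_card_tail (T i)).symm.trans (h.card_eq i)

theorem tailCard_succ_le (h : IsSaturatedChain ν n T) (i : ℕ) :
    tailCard T (i + 1) ≤ tailCard T i + 1 := by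
  have := h.rowLen_zero_add_tailCard i
  have := h.rowLen_zero_add_tailCard (i + 1)
  have := rowLen_mono (h.monotone (Nat.le_add_right i 1)) 0
  omega

theorem tail_eq_of_tailCard_eq (h : IsSaturatedChain ν n T) {i i' : ℕ}
    (hi : tailCard T i = tailCard T i') : tail (T i) = tail (T i') := by
  wlog hle : i ≤ i' generalizing i i'
  · exact (this hi.symm (le_of_not_ge hle)).symm
  exact YoungDiagram.ext
    (eq_of_subset_of_card_le (cells_subset_iff.mpr (tail_mono (h.monotone hle))) hi.ge)

theorem tailCard_eq_countBelow (h : IsSaturatedChain ν n T) (i : ℕ) :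
    tailCard T i = countBelow (growthSet T n) i := by
  induction i with
  | zero => simp [h.tailCard_zero, countBelow]
  | succ i ih =>
    rw [countBelow_succ, ← ih]
    have := h.tailCard_succ_le i
    have := h.tailCard_mono (Nat.le_add_right i 1)
    rcases lt_or_ge i n with hi | hi
    · by_cases hgrow : tailCard T (i + 1) = tailCard T i + 1
      · simp [growthSet, hi, hgrow]
      · simp [growthSet, hgrow]; omega
    · simp [growthSet, hi.not_gt, h.tailCard_of_le hi, h.tailCard_of_le (hi.trans i.le_succ)]

theorem card_growthSet (h : IsSaturatedChain ν n T) : #(growthSet T n) = (tail ν).card := by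
  have := h.tailCard_eq_countBelow n
  rwa [h.tailCard_of_le le_rfl, eq_comm,
    countBelow_of_subset_range (B := growthSet T n) (filter_subset _ _) le_rfl] at this

theorem exists_tailCard_eq (h : IsSaturatedChain ν n T) {j : ℕ} (hj : j ≤ (tail ν).card) :
    ∃ i, tailCard T i = j :=
  Nat.exists_eq_of_le_of_map_succ_le h.tailCard_succ_le (h.tailCard_zero.trans_le j.zero_le)
    (hj.trans (h.tailCard_of_le le_rfl).ge)

variable {k : ℕ}

theorem card_lowerChain (h : IsSaturatedChain ν n T) (hk : (tail ν).card = k) (j : ℕ) :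
    (lowerChain k T j).card = min j k :=
  Classical.epsilon_spec (h.exists_tailCard_eq (hk ▸ min_le_right j k))

theorem lowerChain_eq (h : IsSaturatedChain ν n T) (hk : (tail ν).card = k) {i j : ℕ}
    (hij : tailCard T i = min j k) : lowerChain k T j = tail (T i) :=
  h.tail_eq_of_tailCard_eq ((h.card_lowerChain hk j).trans hij.symm)

theorem lowerChain_tailCard (h : IsSaturatedChain ν n T) (hk : (tail ν).card = k) (i : ℕ) :
    lowerChain k T (tailCard T i) = tail (T i) :=
  h.lowerChain_eq hk (Nat.min_eq_left (hk ▸ h.tailCard_le i)).symm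

theorem isSaturatedChain_lowerChain (h : IsSaturatedChain ν n T) (hk : (tail ν).card = k) :
    IsSaturatedChain (tail ν) k (lowerChain k T) where
  zero := by
    rw [h.lowerChain_eq hk (i := 0) (by simp [h.tailCard_zero]), h.zero, tail_bot]
  eq_of_le j hj := by
    rw [h.lowerChain_eq hk (i := n) (by rw [h.tailCard_of_le le_rfl]; omega), h.eq_of_le le_rfl]
  le_succ j hj := by
    obtain ⟨i, hi⟩ := h.exists_tailCard_eq (j := j) (by omega)
    obtain ⟨i', hi'⟩ := h.exists_tailCard_eq (j := j + 1) (by omega)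
    have hii' : i ≤ i' := le_of_not_gt fun hlt => by have := h.tailCard_mono hlt.le; omega
    rw [h.lowerChain_eq hk (i := i) (by omega), h.lowerChain_eq hk (i := i') (by omega)]
    exact tail_mono (h.monotone hii')
  card_succ j hj := by
    rw [h.card_lowerChain hk, h.card_lowerChain hk]; omega

theorem eq_of_growthSet_eq_of_lowerChain_eq {T' : ℕ → YoungDiagram}
    (h : IsSaturatedChain ν n T) (h' : IsSaturatedChain ν n T')
    (hB : growthSet T n = growthSet T' n)
    (hS : lowerChain (tail ν).card T = lowerChain (tail ν).card T') : T = T' := funext fun i => by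
  have hc : tailCard T i = tailCard T' i := by
    rw [h.tailCard_eq_countBelow, h'.tailCard_eq_countBelow, hB]
  refine ext_of_rowLen_zero_of_tail ?_ ?_
  · have := h.rowLen_zero_add_tailCard i
    have := h'.rowLen_zero_add_tailCard i
    omega
  · rw [← h.lowerChain_tailCard rfl, ← h'.lowerChain_tailCard rfl, hc, hS]

end IsSaturatedChain

instance (ν : YoungDiagram) : Finite {μ : YoungDiagram // μ ≤ ν} :=
  Finite.of_injective (β := ν.cells.powerset)
    (fun μ => ⟨μ.1.cells, mem_powerset.mpr (cells_subset_iff.mpr μ.2)⟩)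
    fun _ _ h => Subtype.ext (YoungDiagram.ext (congrArg Subtype.val h))

instance (ν : YoungDiagram) (n : ℕ) :
    Finite {T : ℕ → YoungDiagram // IsSaturatedChain ν n T} :=
  Finite.of_injective (β := Fin (n + 1) → {μ : YoungDiagram // μ ≤ ν})
    (fun T i => ⟨T.1 i, T.2.le i⟩) fun T T' h => Subtype.ext <| funext fun i => by
      rcases le_or_gt i n with hi | hi
      · exact congrArg Subtype.val (congrFun h ⟨i, Nat.lt_succ_of_le hi⟩)
      · rw [T.2.eq_of_le hi.le, T'.2.eq_of_le hi.le]

theorem dimSYT_le_choose_mul_dimSYT_tail (ν : YoungDiagram) :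
    dimSYT ν ≤ ν.card.choose (tail ν).card * dimSYT (tail ν) := by
  set n := ν.card
  set k := (tail ν).card
  rw [dimSYT, dimSYT, chainCount_bot_eq_card, chainCount_bot_eq_card]
  calc Nat.card {T // IsSaturatedChain ν n T}
      ≤ Nat.card ({B // B ∈ (range n).powersetCard k} ×
          {S // IsSaturatedChain (tail ν) k S}) :=
        Nat.card_le_card_of_injective
          (fun T => (⟨growthSet T.1 n,
              mem_powersetCard.mpr ⟨filter_subset _ _, T.2.card_growthSet⟩⟩,
            ⟨lowerChain k T.1, T.2.isSaturatedChain_lowerChain rfl⟩))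
          fun T T' hTT' => Subtype.ext <| T.2.eq_of_growthSet_eq_of_lowerChain_eq T'.2
            (congrArg (·.1.1) hTT') (congrArg (·.2.1) hTT')
    _ = n.choose k * Nat.card {S // IsSaturatedChain (tail ν) k S} := by
      rw [Nat.card_prod, Nat.card_eq_finsetCard, card_powersetCard, card_range]

/-- Steps at times in `B` follow `S` below the first row, the other steps lengthen the first row:
an inverse of `T ↦ (growthSet T n, lowerChain k T)`. -/
def mergeChain (n : ℕ) (B : Finset ℕ) (S : ℕ → YoungDiagram) (i : ℕ) : YoungDiagram :=
  cons (min i n - countBelow B i) (S (countBelow B i))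

section mergeChain

variable {σ : YoungDiagram} {m : ℕ} {B : Finset ℕ} {S : ℕ → YoungDiagram}

theorem tail_mergeChain (n i : ℕ) : tail (mergeChain n B S i) = S (countBelow B i) :=
  tail_cons _ _

theorem tailCard_mergeChain (hB : B ∈ (Ico (σ.rowLen 0) (m + σ.card)).powersetCard σ.card)
    (hS : IsSaturatedChain σ σ.card S) (n i : ℕ) :
    tailCard (mergeChain n B S) i = countBelow B i := by
  rw [tailCard, tail_mergeChain, hS.card_eq, Nat.min_eq_left]
  exact (mem_powersetCard.mp hB).2 ▸ countBelow_le_card B i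

theorem rowLen_zero_mergeChain (hm : σ.rowLen 0 ≤ m)
    (hB : B ∈ (Ico (σ.rowLen 0) (m + σ.card)).powersetCard σ.card)
    (hS : IsSaturatedChain σ σ.card S) (i : ℕ) :
    (mergeChain (m + σ.card) B S i).rowLen 0 = min i (m + σ.card) - countBelow B i := by
  obtain ⟨hBsub, hBcard⟩ := mem_powersetCard.mp hB
  rw [mergeChain, rowLen_cons_zero, max_eq_left]
  have := countBelow_le_sub hBsub i
  have := hBcard ▸ countBelow_le_card B i
  rcases Nat.eq_zero_or_pos (countBelow B i) with h₀ | hpos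
  · simp [h₀, hS.zero]
  · have := rowLen_mono (hS.le (countBelow B i)) 0
    omega

theorem isSaturatedChain_mergeChain (hm : σ.rowLen 0 ≤ m)
    (hB : B ∈ (Ico (σ.rowLen 0) (m + σ.card)).powersetCard σ.card)
    (hS : IsSaturatedChain σ σ.card S) :
    IsSaturatedChain (cons m σ) (m + σ.card) (mergeChain (m + σ.card) B S) := by
  have hBsub := (mem_powersetCard.mp hB).1
  have hBcard := (mem_powersetCard.mp hB).2
  have hcard (i : ℕ) : (mergeChain (m + σ.card) B S i).card = min i (m + σ.card) := by
    rw [card_eq_rowLen_zero_add_card_tail, rowLen_zero_mergeChain hm hB hS,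
      ← tailCard, tailCard_mergeChain hB hS]
    have := countBelow_le_sub hBsub i
    have := hBcard ▸ countBelow_le_card B i
    omega
  refine ⟨?_, fun i hi => ?_, fun i hi => ?_, fun i hi => ?_⟩
  · simp [mergeChain, countBelow, hS.zero]
  · rw [mergeChain, countBelow_of_subset_range
      (fun b hb => mem_range.mpr (mem_Ico.mp (hBsub hb)).2) hi, hBcard,
      hS.eq_of_le le_rfl, Nat.min_eq_right hi, Nat.add_sub_cancel]
  · have := countBelow_succ B i
    exact cons_mono (by split_ifs at this <;> omega) (hS.monotone (countBelow_mono B i.le_succ))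
  · rw [hcard, hcard]; omega

theorem growthSet_mergeChain (hB : B ∈ (Ico (σ.rowLen 0) (m + σ.card)).powersetCard σ.card)
    (hS : IsSaturatedChain σ σ.card S) :
    growthSet (mergeChain (m + σ.card) B S) (m + σ.card) = B := by
  ext i
  have hlt (hi : i ∈ B) : i < m + σ.card := (mem_Ico.mp ((mem_powersetCard.mp hB).1 hi)).2
  simp only [growthSet, mem_filter, mem_range, tailCard_mergeChain hB hS, countBelow_succ]
  by_cases hi : i ∈ B <;> simp [hi, hlt]

theorem lowerChain_mergeChain (hm : σ.rowLen 0 ≤ m)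
    (hB : B ∈ (Ico (σ.rowLen 0) (m + σ.card)).powersetCard σ.card)
    (hS : IsSaturatedChain σ σ.card S) :
    lowerChain σ.card (mergeChain (m + σ.card) B S) = S := funext fun j => by
  have hT := isSaturatedChain_mergeChain hm hB hS
  have hk : (tail (cons m σ)).card = σ.card := by rw [tail_cons]
  obtain ⟨i, hi⟩ := hT.exists_tailCard_eq (j := min j σ.card) (hk ▸ min_le_right _ _)
  rw [hT.lowerChain_eq hk hi, tail_mergeChain, ← tailCard_mergeChain hB hS (m + σ.card) i, hi]
  rcases le_total j σ.card with hj | hj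
  · rw [min_eq_left hj]
  · rw [min_eq_right hj, hS.eq_of_le le_rfl, hS.eq_of_le hj]

end mergeChain

theorem choose_mul_dimSYT_le_dimSYT_cons {σ : YoungDiagram} {m : ℕ} (hm : σ.rowLen 0 ≤ m) :
    (m + σ.card - σ.rowLen 0).choose σ.card * dimSYT σ ≤ dimSYT (cons m σ) := by
  have hcard : (cons m σ).card = m + σ.card := by simp [hm]
  rw [dimSYT, dimSYT, hcard, chainCount_bot_eq_card, chainCount_bot_eq_card]
  calc (m + σ.card - σ.rowLen 0).choose σ.card * Nat.card {S // IsSaturatedChain σ σ.card S}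
      = Nat.card ({B // B ∈ (Ico (σ.rowLen 0) (m + σ.card)).powersetCard σ.card} ×
          {S // IsSaturatedChain σ σ.card S}) := by
        rw [Nat.card_prod, Nat.card_eq_finsetCard, card_powersetCard, Nat.card_Ico]
    _ ≤ Nat.card {T // IsSaturatedChain (cons m σ) (m + σ.card) T} :=
        Nat.card_le_card_of_injective
          (fun BS => ⟨mergeChain (m + σ.card) BS.1.1 BS.2.1,
            isSaturatedChain_mergeChain hm BS.1.2 BS.2.2⟩)
          fun ⟨⟨B, hB⟩, ⟨S, hS⟩⟩ ⟨⟨B', hB'⟩, ⟨S', hS'⟩⟩ h => by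
            have h : mergeChain (m + σ.card) B S = mergeChain (m + σ.card) B' S' :=
              congrArg Subtype.val h
            obtain rfl : B = B' := by
              rw [← growthSet_mergeChain hB hS, h, growthSet_mergeChain hB' hS']
            obtain rfl : S = S' := by
              rw [← lowerChain_mergeChain hm hB hS, h, lowerChain_mergeChain hm hB' hS']
            rfl

open Filter Topology Asymptotics

theorem isEquivalent_choose_sub (c k : ℕ) :
    (fun n : ℕ => ((n - c).choose k : ℝ)) ~[atTop] fun n => (n.choose k : ℝ) := by
  have hadd : (fun m : ℕ => (m : ℝ)) ~[atTop] fun m => (m : ℝ) + c := by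
    refine (isEquivalent_iff_tendsto_one ?_).mpr (tendsto_natCast_div_add_atTop (c : ℝ))
    exact (eventually_gt_atTop 0).mono fun m hm =>
      (add_pos_of_pos_of_nonneg (Nat.cast_pos.mpr hm) c.cast_nonneg).ne'
  have hsub : (fun n : ℕ => ((n - c : ℕ) : ℝ)) ~[atTop] fun n => (n : ℝ) :=
    (hadd.comp_tendsto (tendsto_sub_atTop_nat c)).congr_right <|
      (eventually_ge_atTop c).mono fun n hn => by simp [Nat.cast_sub hn]
  calc _ ~[atTop] fun n : ℕ => ((n - c : ℕ) : ℝ) ^ k / k.factorial :=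
        (isEquivalent_choose k).comp_tendsto (tendsto_sub_atTop_nat c)
    _ ~[atTop] fun n : ℕ => (n : ℝ) ^ k / k.factorial := (hsub.pow k).div IsEquivalent.refl
    _ ~[atTop] _ := (isEquivalent_choose k).symm

theorem tendsto_of_choose_sub_mul_le_of_le_choose_mul {g : ℕ → ℕ} {a c k : ℕ}
    (hlow : ∀ᶠ n in atTop, (n - c).choose k * a ≤ g n)
    (hupp : ∀ᶠ n in atTop, g n ≤ n.choose k * a) :
    Tendsto (fun n => (g n : ℝ) * (n - k).factorial / n.factorial) atTop
      (𝓝 (a / k.factorial)) := by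
  have hupp' : Tendsto (fun n => (n.choose k * a : ℝ) * (n - k).factorial / n.factorial) atTop
      (𝓝 (a / k.factorial)) :=
    tendsto_const_nhds.congr' <| (eventually_ge_atTop k).mono fun n hn => by
      dsimp only
      rw [Nat.choose_eq_factorial_div_factorial hn,
        Nat.cast_div (Nat.factorial_mul_factorial_dvd_factorial hn) (by positivity)]
      push_cast
      field_simp
  have hlow' : Tendsto (fun n => ((n - c).choose k * a : ℝ) * (n - k).factorial / n.factorial)
      atTop (𝓝 (a / k.factorial)) :=
    (IsEquivalent.tendsto_nhds_iff <| (((isEquivalent_choose_sub c k).mul IsEquivalent.refl).mul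
      IsEquivalent.refl).div IsEquivalent.refl).mpr hupp'
  refine tendsto_of_tendsto_of_tendsto_of_le_of_le' hlow' hupp' ?_ ?_
  · filter_upwards [hlow] with n hn
    gcongr
    exact_mod_cast hn
  · filter_upwards [hupp] with n hn
    gcongr
    exact_mod_cast hn

theorem kostka_dim_ratio_tendsto_general (k : ℕ) (lam mu : YoungDiagram)
    (hmu : mu.card = k)
    (f : ℕ → ℕ)
    (hf : ∀ n : ℕ, k + max (lam.rowLen 0) (mu.rowLen 0) ≤ n → ∀ mu' : YoungDiagram,
      mu'.rowLen 0 = n - k → (∀ i : ℕ, mu'.rowLen (i + 1) = mu.rowLen i) →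
      f n = kostka mu' (fun i => if i = 0 then n - k else lam.rowLen (i - 1)) * dimSYT mu') :
    Filter.Tendsto
      (fun n : ℕ => (f n : ℝ) /
        ((n.factorial : ℝ) / (((n - k).factorial : ℝ) *
          ∏ i ∈ Finset.range k, ((lam.rowLen i).factorial : ℝ))))
      Filter.atTop
      (nhds ((kostka mu (fun i => lam.rowLen i) : ℝ) * (dimSYT mu : ℝ) *
        (∏ i ∈ Finset.range k, ((lam.rowLen i).factorial : ℝ)) / (k.factorial : ℝ))) := by
  set K := kostka mu fun i => lam.rowLen i
  have hf' : ∀ᶠ n in atTop,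
      k ≤ n ∧ mu.rowLen 0 ≤ n - k ∧ f n = K * dimSYT (cons (n - k) mu) := by
    filter_upwards [eventually_ge_atTop (k + max (lam.rowLen 0) (mu.rowLen 0))] with n hn
    have hm : mu.rowLen 0 ≤ n - k := by omega
    refine ⟨by omega, hm, ?_⟩
    rw [hf n hn (cons (n - k) mu) (by simp [hm]) fun i => rowLen_cons_succ, kostka_cons hm rfl]
    simp [K]
  have hlow : ∀ᶠ n in atTop, (n - mu.rowLen 0).choose k * (K * dimSYT mu) ≤ f n :=
    hf'.mono fun n ⟨hkn, hm, hfn⟩ => by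
      have := choose_mul_dimSYT_le_dimSYT_cons hm
      rw [hmu, Nat.sub_add_cancel hkn] at this
      rw [hfn, mul_left_comm]
      exact Nat.mul_le_mul_left K this
  have hupp : ∀ᶠ n in atTop, f n ≤ n.choose k * (K * dimSYT mu) :=
    hf'.mono fun n ⟨hkn, hm, hfn⟩ => by
      have := dimSYT_le_choose_mul_dimSYT_tail (cons (n - k) mu)
      rw [YoungDiagram.card_cons, tail_cons, max_eq_left hm, hmu, Nat.sub_add_cancel hkn] at this
      rw [hfn, mul_left_comm]
      exact Nat.mul_le_mul_left K this
  convert (tendsto_of_choose_sub_mul_le_of_le_choose_mul hlow hupp).mul_const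
    (∏ i ∈ Finset.range k, ((lam.rowLen i).factorial : ℝ)) using 1
  · funext n
    rw [div_div_eq_mul_div]
    ring
  · rw [Nat.cast_mul, div_mul_eq_mul_div]

/-- For partitions `λ, μ` of `k`, with `D_n = n!/((n-k)!·∏ᵢ λᵢ!)`, the sequence
`K_{(n-k,μ),(n-k,λ)} · dim (n-k,μ) / D_n` tends to `K_{μ,λ} · dim μ · (∏ᵢ λᵢ!)/k!` as
`n → ∞`.  Here `f n` encodes `K_{(n-k,μ),(n-k,λ)} · dim (n-k,μ)`, the shape `(n-k,μ)`
being characterized by its row lengths. -/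
theorem kostka_dim_ratio_tendsto (k : ℕ) (lam mu : YoungDiagram)
    (hlam : lam.card = k) (hmu : mu.card = k)
    (f : ℕ → ℕ)
    (hf : ∀ n : ℕ, k + max (lam.rowLen 0) (mu.rowLen 0) ≤ n → ∀ mu' : YoungDiagram,
      mu'.rowLen 0 = n - k → (∀ i : ℕ, mu'.rowLen (i + 1) = mu.rowLen i) →
      f n = kostka mu' (fun i => if i = 0 then n - k else lam.rowLen (i - 1)) * dimSYT mu') :
    Filter.Tendsto
      (fun n : ℕ => (f n : ℝ) /
        ((n.factorial : ℝ) / (((n - k).factorial : ℝ) *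
          ∏ i ∈ Finset.range k, ((lam.rowLen i).factorial : ℝ))))
      Filter.atTop
      (nhds ((kostka mu (fun i => lam.rowLen i) : ℝ) * (dimSYT mu : ℝ) *
        (∏ i ∈ Finset.range k, ((lam.rowLen i).factorial : ℝ)) / (k.factorial : ℝ))) :=
  kostka_dim_ratio_tendsto_general k lam mu hmu f hf
end

section
/- For every Young diagram λ with n cells, Σ_Λ dim Λ = (n+1)·dim λ, where the sum is over all Young diagrams Λ with n+1 cells that contain λ. Consequently, the Plancherel transition probabilities p(λ,Λ) = dim Λ/((n+1)·dim λ) are nonnegative and sum to 1 over all such Λ. -/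
open scoped BigOperators

/-!
The Young lattice is a differential poset. A diagram has exactly one more addable than removable
cell: the rows that accept a new cell are row `0` and the successors of the rows that can lose
one. Two distinct diagrams `μ ≠ ν` have as many common upper covers as common lower covers, since
these can only be `μ ⊔ ν` and `μ ⊓ ν`, and `|μ ⊔ ν| + |μ ⊓ ν| = |μ| + |ν|`. For the up and down
operators this says `DU = UD + I`. Applied to `dim`, which satisfies `dim Λ = ∑_{ν ⋖ Λ} dim ν`,
and with induction on `|λ|`, it gives
`∑_{Λ ⋗ λ} dim Λ = dim λ + ∑_{μ ⋖ λ} |λ| dim μ = (|λ| + 1) dim λ`.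
-/

namespace YoungDiagram

open Finset

variable {μ ν ρ Λ : YoungDiagram} {c c' : ℕ × ℕ} {m : ℕ}

instance : DecidableEq YoungDiagram := fun μ ν =>
  decidable_of_iff (μ.cells = ν.cells) YoungDiagram.ext_iff.symm

lemma card_strictMono : StrictMono YoungDiagram.card := fun _ _ h =>
  card_lt_card (cells_ssubset_iff.mpr h)

lemma eq_of_le_of_card_le (h : μ ≤ ν) (hc : ν.card ≤ μ.card) : μ = ν :=
  h.eq_of_not_lt fun hlt => (card_strictMono hlt).not_ge hc

lemma card_sup_add_card_inf (μ ν : YoungDiagram) :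
    (μ ⊔ ν).card + (μ ⊓ ν).card = μ.card + ν.card := by
  simp only [YoungDiagram.card, cells_sup, cells_inf, card_union_add_card_inter]

lemma lt_card_of_mem (hc : c ∈ μ) : c.1 < μ.card ∧ c.2 < μ.card := by
  have h0 : (c.1, 0) ∈ μ := μ.up_left_mem le_rfl (Nat.zero_le _) hc
  constructor
  · calc c.1 < μ.colLen 0 := mem_iff_lt_colLen.mp h0
      _ ≤ μ.card := by rw [colLen_eq_card]; exact card_filter_le _ _
  · calc c.2 < μ.rowLen c.1 := mem_iff_lt_rowLen.mp hc
      _ ≤ μ.card := by rw [rowLen_eq_card]; exact card_filter_le _ _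

lemma finite_setOf_cells_subset (s : Finset (ℕ × ℕ)) : {μ : YoungDiagram | μ.cells ⊆ s}.Finite :=
  (s.powerset.finite_toSet.preimage (Set.injOn_of_injective fun _ _ => YoungDiagram.ext)).subset
    fun _ h => mem_powerset.mpr h

lemma finite_setOf_card_eq (n : ℕ) : {μ : YoungDiagram | μ.card = n}.Finite :=
  (finite_setOf_cells_subset (range n ×ˢ range n)).subset fun μ (hμ : μ.card = n) c hc => by
    simpa only [mem_product, mem_range, ← hμ] using lt_card_of_mem ((mem_cells c).mp hc)

noncomputable def upCovers (μ : YoungDiagram) : Finset YoungDiagram :=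
  ((finite_setOf_card_eq (μ.card + 1)).subset fun _ h => h.2 :
    {Λ : YoungDiagram | μ ≤ Λ ∧ Λ.card = μ.card + 1}.Finite).toFinset

noncomputable def downCovers (Λ : YoungDiagram) : Finset YoungDiagram :=
  ((finite_setOf_cells_subset Λ.cells).subset fun _ h => cells_subset_iff.mpr h.1 :
    {μ : YoungDiagram | μ ≤ Λ ∧ Λ.card = μ.card + 1}.Finite).toFinset

lemma coe_upCovers (μ : YoungDiagram) :
    (upCovers μ : Set YoungDiagram) = {Λ | μ ≤ Λ ∧ Λ.card = μ.card + 1} :=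
  Set.Finite.coe_toFinset _

@[simp] lemma mem_upCovers :
    Λ ∈ upCovers μ ↔ μ ≤ Λ ∧ Λ.card = μ.card + 1 :=
  Set.Finite.mem_toFinset _

@[simp] lemma mem_downCovers :
    μ ∈ downCovers Λ ↔ μ ≤ Λ ∧ Λ.card = μ.card + 1 :=
  Set.Finite.mem_toFinset _

lemma exists_cells_eq_insert (h : μ ≤ Λ) (hc : Λ.card = μ.card + 1) :
    ∃ c ∉ μ, Λ.cells = insert c μ.cells := by
  have hsub := cells_subset_iff.mpr h
  obtain ⟨c, hc⟩ := card_eq_one.mp (show #(Λ.cells \ μ.cells) = 1 by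
    rw [card_sdiff_of_subset hsub, show #Λ.cells = #μ.cells + 1 from hc]; omega)
  refine ⟨c, fun hcμ => ?_, ?_⟩
  · simpa [(mem_cells c).mpr hcμ] using hc.symm.subset (mem_singleton_self c)
  · rw [insert_eq, ← hc, sdiff_union_of_subset hsub]

def insertCell (μ : YoungDiagram) (c : ℕ × ℕ) (h : ∀ d < c, d ∈ μ) : YoungDiagram where
  cells := insert c μ.cells
  isLowerSet a b hba ha := by
    simp only [coe_insert, Set.mem_insert_iff, mem_coe, mem_cells] at ha ⊢
    rcases ha with rfl | ha
    · exact hba.eq_or_lt.imp id (h b)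
    · exact Or.inr (μ.isLowerSet hba ha)

def eraseCell (μ : YoungDiagram) (c : ℕ × ℕ) (h : ∀ d, c < d → d ∉ μ) : YoungDiagram where
  cells := μ.cells.erase c
  isLowerSet a b hba ha := by
    simp only [coe_erase, Set.mem_sdiff, mem_coe, mem_cells, Set.mem_singleton_iff] at ha ⊢
    refine ⟨μ.isLowerSet hba ha.1, ?_⟩
    rintro rfl
    exact h a (hba.lt_of_ne (Ne.symm ha.2)) ha.1

def IsAddableCell (μ : YoungDiagram) (c : ℕ × ℕ) : Prop := c ∉ μ ∧ ∀ d < c, d ∈ μ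

def IsRemovableCell (μ : YoungDiagram) (c : ℕ × ℕ) : Prop := c ∈ μ ∧ ∀ d, c < d → d ∉ μ

lemma insertCell_mem_upCovers (hc : μ.IsAddableCell c) : insertCell μ c hc.2 ∈ upCovers μ := by
  rw [mem_upCovers, ← cells_subset_iff]
  exact ⟨subset_insert _ _, card_insert_of_notMem ((mem_cells c).not.mpr hc.1)⟩

lemma eraseCell_mem_downCovers (hc : μ.IsRemovableCell c) : eraseCell μ c hc.2 ∈ downCovers μ := by
  rw [mem_downCovers, ← cells_subset_iff]
  exact ⟨erase_subset _ _, (card_erase_add_one ((mem_cells c).mpr hc.1)).symm⟩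

lemma eq_of_insertCell_eq {h h'} (hc : c ∉ μ) (heq : insertCell μ c h = insertCell μ c' h') :
    c = c' := by
  have : c ∈ (insertCell μ c' h').cells := heq ▸ mem_insert_self c μ.cells
  simpa [insertCell, (mem_cells c).not.mpr hc] using this

lemma eq_of_eraseCell_eq {h h'} (hc' : c' ∈ μ) (heq : eraseCell μ c h = eraseCell μ c' h') :
    c = c' := by
  by_contra hne
  have : c' ∈ (eraseCell μ c h).cells := mem_erase.mpr ⟨Ne.symm hne, (mem_cells c').mpr hc'⟩
  rw [heq] at this
  exact (mem_erase.mp this).1 rfl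

lemma exists_eq_insertCell (hΛ : Λ ∈ upCovers μ) :
    ∃ c, ∃ hc : μ.IsAddableCell c, Λ = insertCell μ c hc.2 := by
  obtain ⟨c, hc, hcells⟩ := exists_cells_eq_insert (mem_upCovers.mp hΛ).1 (mem_upCovers.mp hΛ).2
  have hcΛ : c ∈ Λ := by rw [← mem_cells, hcells]; exact mem_insert_self c μ.cells
  have h : ∀ d < c, d ∈ μ := fun d hd => by
    have hdΛ := (mem_cells d).mpr (Λ.isLowerSet hd.le hcΛ)
    rw [hcells, mem_insert] at hdΛ
    exact (mem_cells d).mp (hdΛ.resolve_left hd.ne)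
  exact ⟨c, ⟨hc, h⟩, YoungDiagram.ext hcells⟩

lemma exists_eq_eraseCell (hμ : μ ∈ downCovers Λ) :
    ∃ c, ∃ hc : Λ.IsRemovableCell c, μ = eraseCell Λ c hc.2 := by
  obtain ⟨c, hc, hcells⟩ := exists_cells_eq_insert (mem_downCovers.mp hμ).1 (mem_downCovers.mp hμ).2
  have hcΛ : c ∈ Λ := by rw [← mem_cells, hcells]; exact mem_insert_self c μ.cells
  have h : ∀ d, c < d → d ∉ Λ := fun d hd hdΛ => by
    rw [← mem_cells, hcells, mem_insert] at hdΛ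
    rcases hdΛ with rfl | hdμ
    · exact hd.ne rfl
    · exact hc (μ.isLowerSet hd.le hdμ)
  refine ⟨c, ⟨hcΛ, h⟩, YoungDiagram.ext ?_⟩
  change μ.cells = Λ.cells.erase c
  rw [hcells, erase_insert ((mem_cells c).not.mpr hc)]

def addableRows (μ : YoungDiagram) : Finset ℕ :=
  (range (μ.colLen 0 + 1)).filter fun i => i = 0 ∨ μ.rowLen i < μ.rowLen (i - 1)

def removableRows (μ : YoungDiagram) : Finset ℕ :=
  (range (μ.colLen 0)).filter fun i => μ.rowLen (i + 1) < μ.rowLen i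

lemma mem_addableRows {i : ℕ} : i ∈ addableRows μ ↔ i = 0 ∨ μ.rowLen i < μ.rowLen (i - 1) := by
  rw [addableRows, mem_filter, mem_range, and_iff_right_iff_imp]
  rintro (rfl | h)
  · omega
  · have := mem_iff_lt_colLen.mp (mem_iff_lt_rowLen.mpr (show 0 < μ.rowLen (i - 1) by omega))
    omega

lemma mem_removableRows {i : ℕ} : i ∈ removableRows μ ↔ μ.rowLen (i + 1) < μ.rowLen i := by
  rw [removableRows, mem_filter, mem_range, and_iff_right_iff_imp]
  exact fun h => mem_iff_lt_colLen.mp (mem_iff_lt_rowLen.mpr (show 0 < μ.rowLen i by omega))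

lemma addableRows_eq_insert_zero (μ : YoungDiagram) :
    addableRows μ = insert 0 ((removableRows μ).map (addRightEmbedding 1)) := by
  ext i
  cases i <;> simp [mem_addableRows, mem_removableRows]

lemma card_addableRows (μ : YoungDiagram) : #(addableRows μ) = #(removableRows μ) + 1 := by
  rw [addableRows_eq_insert_zero, card_insert_of_notMem (by simp), card_map]

lemma isAddableCell_iff {i j : ℕ} :
    μ.IsAddableCell (i, j) ↔ j = μ.rowLen i ∧ i ∈ addableRows μ := by
  rw [IsAddableCell, mem_iff_lt_rowLen, mem_addableRows, not_lt]
  constructor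
  · rintro ⟨hj, h⟩
    have hji : j ≤ μ.rowLen i := by
      by_contra! hlt
      exact (mem_iff_lt_rowLen.mp
        (h (i, μ.rowLen i) (Prod.lt_iff.mpr (Or.inr ⟨le_rfl, hlt⟩)))).false
    refine ⟨le_antisymm hji hj, ?_⟩
    rcases Nat.eq_zero_or_pos i with hi | hi
    · exact Or.inl hi
    · exact Or.inr (hj.trans_lt
        (mem_iff_lt_rowLen.mp (h (i - 1, j) (Prod.lt_iff.mpr (Or.inl ⟨by omega, le_rfl⟩)))))
  · rintro ⟨rfl, hi⟩
    refine ⟨le_rfl, fun ⟨k, l⟩ hkl => mem_iff_lt_rowLen.mpr ?_⟩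
    rcases Prod.lt_iff.mp hkl with ⟨hk, hl⟩ | ⟨hk, hl⟩
    · have hi0 : i ≠ 0 := by rintro rfl; exact Nat.not_lt_zero k hk
      calc l ≤ μ.rowLen i := hl
        _ < μ.rowLen (i - 1) := hi.resolve_left hi0
        _ ≤ μ.rowLen k := μ.rowLen_anti k (i - 1) (by simp only at hk; omega)
    · exact hl.trans_le (μ.rowLen_anti k i hk)

lemma isRemovableCell_iff {i j : ℕ} :
    μ.IsRemovableCell (i, j) ↔ j + 1 = μ.rowLen i ∧ i ∈ removableRows μ := by
  rw [IsRemovableCell, mem_iff_lt_rowLen, mem_removableRows]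
  constructor
  · rintro ⟨hj, h⟩
    have h₁ := h (i, j + 1) (Prod.lt_iff.mpr (Or.inr ⟨le_rfl, j.lt_succ_self⟩))
    have h₂ := h (i + 1, j) (Prod.lt_iff.mpr (Or.inl ⟨i.lt_succ_self, le_rfl⟩))
    rw [mem_iff_lt_rowLen, not_lt] at h₁ h₂
    omega
  · rintro ⟨hj, hi⟩
    refine ⟨by omega, fun ⟨k, l⟩ hkl => mem_iff_lt_rowLen.not.mpr (not_lt.mpr ?_)⟩
    rcases Prod.lt_iff.mp hkl with ⟨hk, hl⟩ | ⟨hk, hl⟩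
    · have := μ.rowLen_anti (i + 1) k hk
      simp only at hl
      omega
    · have := μ.rowLen_anti i k hk
      simp only at hl
      omega

lemma isAddableCell_of_mem_addableRows {i : ℕ} (hi : i ∈ addableRows μ) :
    μ.IsAddableCell (i, μ.rowLen i) :=
  isAddableCell_iff.mpr ⟨rfl, hi⟩

lemma isRemovableCell_of_mem_removableRows {i : ℕ} (hi : i ∈ removableRows μ) :
    μ.IsRemovableCell (i, μ.rowLen i - 1) :=
  isRemovableCell_iff.mpr ⟨by have := mem_removableRows.mp hi; omega, hi⟩

lemma card_upCovers (μ : YoungDiagram) : #(upCovers μ) = #(addableRows μ) := by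
  symm
  refine card_bij (fun i hi => insertCell μ _ (isAddableCell_of_mem_addableRows hi).2)
    (fun _ hi => insertCell_mem_upCovers (isAddableCell_of_mem_addableRows hi))
    (fun _ hi _ _ heq => congrArg Prod.fst
      (eq_of_insertCell_eq (isAddableCell_of_mem_addableRows hi).1 heq)) ?_
  intro Λ hΛ
  obtain ⟨⟨i, j⟩, hc, rfl⟩ := exists_eq_insertCell hΛ
  obtain ⟨rfl, hi⟩ := isAddableCell_iff.mp hc
  exact ⟨i, hi, rfl⟩

lemma card_downCovers (μ : YoungDiagram) : #(downCovers μ) = #(removableRows μ) := by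
  symm
  refine card_bij (fun i hi => eraseCell μ _ (isRemovableCell_of_mem_removableRows hi).2)
    (fun _ hi => eraseCell_mem_downCovers (isRemovableCell_of_mem_removableRows hi))
    (fun _ _ _ hi' heq => congrArg Prod.fst
      (eq_of_eraseCell_eq (isRemovableCell_of_mem_removableRows hi').1 heq)) ?_
  intro ν hν
  obtain ⟨⟨i, j⟩, hc, rfl⟩ := exists_eq_eraseCell hν
  obtain ⟨hj, hi⟩ := isRemovableCell_iff.mp hc
  obtain rfl : j = μ.rowLen i - 1 := by omega
  exact ⟨i, hi, rfl⟩

lemma card_upCovers_eq_card_downCovers_add_one (μ : YoungDiagram) :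
    #(upCovers μ) = #(downCovers μ) + 1 := by
  rw [card_upCovers, card_downCovers, card_addableRows]

lemma eq_sup_of_mem_upCovers (hne : μ ≠ ν) (hμ : Λ ∈ upCovers μ) (hν : Λ ∈ upCovers ν) :
    Λ = μ ⊔ ν := by
  rw [mem_upCovers] at hμ hν
  have hlt : μ < μ ⊔ ν := lt_of_le_of_ne le_sup_left fun h =>
    hne (eq_of_le_of_card_le (sup_eq_left.mp h.symm) (by omega)).symm
  exact (eq_of_le_of_card_le (sup_le hμ.1 hν.1) (by have := card_strictMono hlt; omega)).symm

lemma eq_inf_of_mem_downCovers (hne : μ ≠ ν) (hμ : ρ ∈ downCovers μ) (hν : ρ ∈ downCovers ν) :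
    ρ = μ ⊓ ν := by
  rw [mem_downCovers] at hμ hν
  have hlt : μ ⊓ ν < μ := lt_of_le_of_ne inf_le_left fun h =>
    hne (eq_of_le_of_card_le (inf_eq_left.mp h) (by omega))
  exact eq_of_le_of_card_le (le_inf hμ.1 hν.1) (by have := card_strictMono hlt; omega)

lemma card_upCovers_inter_upCovers_of_ne (hne : μ ≠ ν) :
    #(upCovers μ ∩ upCovers ν) = #(downCovers μ ∩ downCovers ν) := by
  have hup : upCovers μ ∩ upCovers ν ⊆ {μ ⊔ ν} := fun Λ hΛ =>
    mem_singleton.mpr (eq_sup_of_mem_upCovers hne (mem_inter.mp hΛ).1 (mem_inter.mp hΛ).2)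
  have hdown : downCovers μ ∩ downCovers ν ⊆ {μ ⊓ ν} := fun ρ hρ =>
    mem_singleton.mpr (eq_inf_of_mem_downCovers hne (mem_inter.mp hρ).1 (mem_inter.mp hρ).2)
  have hiff : μ ⊔ ν ∈ upCovers μ ∩ upCovers ν ↔ μ ⊓ ν ∈ downCovers μ ∩ downCovers ν := by
    simp only [mem_inter, mem_upCovers, mem_downCovers, le_sup_left, le_sup_right, inf_le_left,
      inf_le_right, true_and]
    have := card_sup_add_card_inf μ ν
    omega
  rcases subset_singleton_iff.mp hup with h | h <;>
    rcases subset_singleton_iff.mp hdown with h' | h' <;> simp_all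

lemma card_upCovers_inter_upCovers (μ ν : YoungDiagram) :
    #(upCovers μ ∩ upCovers ν) = #(downCovers μ ∩ downCovers ν) + if μ = ν then 1 else 0 := by
  split_ifs with h
  · rw [h, inter_self, inter_self, card_upCovers_eq_card_downCovers_add_one]
  · exact card_upCovers_inter_upCovers_of_ne h

lemma sum_upCovers_sum_downCovers {M : Type*} [AddCommMonoid M] (f : YoungDiagram → M)
    (μ : YoungDiagram) :
    ∑ Λ ∈ upCovers μ, ∑ ν ∈ downCovers Λ, f ν =
      f μ + ∑ ρ ∈ downCovers μ, ∑ ν ∈ upCovers ρ, f ν := by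
  set N := (finite_setOf_card_eq μ.card).toFinset
  have hup : ∑ Λ ∈ upCovers μ, ∑ ν ∈ downCovers Λ, f ν =
      ∑ ν ∈ N, #(upCovers μ ∩ upCovers ν) • f ν := by
    rw [sum_comm' (t' := N) (s' := fun ν => upCovers μ ∩ upCovers ν)]
    · simp only [sum_const]
    · intro Λ ν
      simp only [N, mem_inter, mem_upCovers, mem_downCovers, Set.Finite.mem_toFinset]
      exact iff_self_and.mpr fun h => show ν.card = μ.card by omega
  have hdown : ∑ ρ ∈ downCovers μ, ∑ ν ∈ upCovers ρ, f ν =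
      ∑ ν ∈ N, #(downCovers μ ∩ downCovers ν) • f ν := by
    rw [sum_comm' (t' := N) (s' := fun ν => downCovers μ ∩ downCovers ν)]
    · simp only [sum_const]
    · intro ρ ν
      simp only [N, mem_inter, mem_upCovers, mem_downCovers, Set.Finite.mem_toFinset]
      exact iff_self_and.mpr fun h => show ν.card = μ.card by omega
  rw [hup, hdown]
  simp only [card_upCovers_inter_upCovers, add_smul, sum_add_distrib, ite_smul, one_smul,
    zero_smul, sum_ite_eq, if_pos (show μ ∈ N from (Set.Finite.mem_toFinset _).mpr rfl), add_comm]

abbrev SaturatedChain (μ ν : YoungDiagram) (m : ℕ) : Type :=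
  {t : Fin (m + 1) → YoungDiagram //
    t 0 = μ ∧ t (Fin.last m) = ν ∧
    ∀ i : Fin m, t i.castSucc ≤ t i.succ ∧ (t i.succ).card = (t i.castSucc).card + 1}

lemma chainCount_eq_card (μ ν : YoungDiagram) (m : ℕ) :
    chainCount μ ν m = Nat.card (SaturatedChain μ ν m) := rfl

instance (μ ν : YoungDiagram) : Subsingleton (SaturatedChain μ ν 0) :=
  ⟨fun s t => Subtype.ext (funext fun i => by rw [Fin.fin_one_eq_zero i, s.2.1, t.2.1])⟩

def SaturatedChain.penultimate (t : SaturatedChain μ Λ (m + 1)) : downCovers Λ :=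
  ⟨t.1 (Fin.last m).castSucc, by
    have h := t.2.2.2 (Fin.last m)
    rw [Fin.succ_last, t.2.2.1] at h
    exact mem_downCovers.mpr h⟩

def penultimateFiberEquiv (ν : downCovers Λ) :
    {t : SaturatedChain μ Λ (m + 1) // t.penultimate = ν} ≃ SaturatedChain μ ν m where
  toFun t := ⟨Fin.init t.1.1, t.1.2.1, congrArg Subtype.val t.2, fun i => by
    simpa only [Fin.init, Fin.succ_castSucc] using t.1.2.2.2 i.castSucc⟩
  invFun s := ⟨⟨Fin.snoc s.1 Λ, by
      refine ⟨by simpa only [← Fin.castSucc_zero, Fin.snoc_castSucc] using s.2.1,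
        Fin.snoc_last _ _, fun i => ?_⟩
      induction i using Fin.lastCases with
      | last =>
        rw [Fin.succ_last, Fin.snoc_last, Fin.snoc_castSucc, s.2.2.1]
        exact mem_downCovers.mp ν.2
      | cast j =>
        rw [Fin.succ_castSucc, Fin.snoc_castSucc, Fin.snoc_castSucc]
        exact s.2.2.2 j⟩,
    Subtype.ext (by simp only [SaturatedChain.penultimate, Fin.snoc_castSucc, s.2.2.1])⟩
  left_inv t := by
    refine Subtype.ext (Subtype.ext ?_)
    conv_rhs => rw [← Fin.snoc_init_self t.1.1]
    rw [t.1.2.2.1]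
  right_inv s := Subtype.ext (Fin.init_snoc (α := fun _ => YoungDiagram) _ _)

def saturatedChainSuccEquiv :
    SaturatedChain μ Λ (m + 1) ≃ Σ ν : downCovers Λ, SaturatedChain μ ν m :=
  (Equiv.sigmaFiberEquiv SaturatedChain.penultimate).symm.trans
    (Equiv.sigmaCongrRight penultimateFiberEquiv)

instance (μ ν : YoungDiagram) (m : ℕ) : Finite (SaturatedChain μ ν m) := by
  induction m generalizing ν with
  | zero => infer_instance
  | succ m ih => exact Finite.of_equiv _ saturatedChainSuccEquiv.symm

lemma chainCount_succ (μ Λ : YoungDiagram) (m : ℕ) :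
    chainCount μ Λ (m + 1) = ∑ ν ∈ downCovers Λ, chainCount μ ν m := by
  rw [chainCount_eq_card, Nat.card_congr saturatedChainSuccEquiv, Nat.card_sigma]
  exact sum_coe_sort (downCovers Λ) fun ν => chainCount μ ν m

lemma chainCount_self_zero (μ : YoungDiagram) : chainCount μ μ 0 = 1 :=
  Nat.card_eq_one_iff_unique.mpr ⟨inferInstance, ⟨⟨fun _ => μ, rfl, rfl, Fin.elim0⟩⟩⟩

lemma dimSYT_bot : dimSYT ⊥ = 1 :=
  chainCount_self_zero ⊥

lemma dimSYT_eq_sum_downCovers (h : 0 < Λ.card) : dimSYT Λ = ∑ ν ∈ downCovers Λ, dimSYT ν := by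
  obtain ⟨m, hm⟩ : ∃ m, Λ.card = m + 1 := ⟨Λ.card - 1, by omega⟩
  rw [dimSYT, hm, chainCount_succ]
  refine sum_congr rfl fun ν hν => ?_
  rw [dimSYT, show ν.card = m by have := (mem_downCovers.mp hν).2; omega]

lemma downCovers_nonempty (h : 0 < Λ.card) : (downCovers Λ).Nonempty := by
  obtain ⟨c, hc, hmax⟩ := Λ.cells.exists_maximal (card_pos.mp h)
  have hrem : Λ.IsRemovableCell c :=
    ⟨(mem_cells c).mp hc, fun d hcd hd => hcd.not_ge (hmax ((mem_cells d).mpr hd) hcd.le)⟩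
  exact ⟨_, eraseCell_mem_downCovers hrem⟩

lemma dimSYT_pos (μ : YoungDiagram) : 0 < dimSYT μ := by
  induction h : μ.card using Nat.strong_induction_on generalizing μ with
  | _ n ih =>
    rcases Nat.eq_zero_or_pos n with rfl | hn
    · rw [← eq_of_le_of_card_le bot_le h.le, dimSYT_bot]
      exact Nat.one_pos
    · rw [dimSYT_eq_sum_downCovers (h ▸ hn)]
      refine sum_pos (fun ν hν => ih ν.card ?_ ν rfl) (downCovers_nonempty (h ▸ hn))
      have := (mem_downCovers.mp hν).2
      omega

theorem sum_upCovers_dimSYT (μ : YoungDiagram) :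
    ∑ Λ ∈ upCovers μ, dimSYT Λ = (μ.card + 1) * dimSYT μ := by
  induction h : μ.card using Nat.strong_induction_on generalizing μ with
  | _ n ih =>
    have hdown : ∀ ρ ∈ downCovers μ, ∑ ν ∈ upCovers ρ, dimSYT ν = n * dimSYT ρ := fun ρ hρ => by
      have := (mem_downCovers.mp hρ).2
      rw [ih ρ.card (by omega) ρ rfl]
      congr 1
      omega
    have hdim : ∑ ρ ∈ downCovers μ, n * dimSYT ρ = n * dimSYT μ := by
      rcases Nat.eq_zero_or_pos n with rfl | hn
      · simp
      · rw [← mul_sum, ← dimSYT_eq_sum_downCovers (h ▸ hn)]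
    calc ∑ Λ ∈ upCovers μ, dimSYT Λ
        = ∑ Λ ∈ upCovers μ, ∑ ν ∈ downCovers Λ, dimSYT ν := sum_congr rfl fun Λ hΛ =>
          dimSYT_eq_sum_downCovers (by rw [(mem_upCovers.mp hΛ).2]; omega)
      _ = dimSYT μ + ∑ ρ ∈ downCovers μ, ∑ ν ∈ upCovers ρ, dimSYT ν :=
          sum_upCovers_sum_downCovers _ _
      _ = (n + 1) * dimSYT μ := by rw [sum_congr rfl hdown, hdim]; ring

end YoungDiagram

/-- For every Young diagram `λ` with `n` cells, `∑_Λ dim Λ = (n+1) · dim λ`, the sum being over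
all Young diagrams `Λ` with `n+1` cells containing `λ`.  Consequently the Plancherel transition
probabilities `p(λ,Λ) = dim Λ / ((n+1) · dim λ)` are nonnegative and sum to `1`. -/
theorem sum_dim_covers (lam : YoungDiagram) :
    (∑ᶠ Lam ∈ {Lam : YoungDiagram | lam ≤ Lam ∧ Lam.card = lam.card + 1}, dimSYT Lam) =
        (lam.card + 1) * dimSYT lam ∧
    (∀ Lam ∈ {Lam : YoungDiagram | lam ≤ Lam ∧ Lam.card = lam.card + 1},
      (0 : ℝ) ≤ (dimSYT Lam : ℝ) / (((lam.card : ℝ) + 1) * (dimSYT lam : ℝ))) ∧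
    ∑ᶠ Lam ∈ {Lam : YoungDiagram | lam ≤ Lam ∧ Lam.card = lam.card + 1},
        (dimSYT Lam : ℝ) / (((lam.card : ℝ) + 1) * (dimSYT lam : ℝ)) = 1 := by
  have hsum := YoungDiagram.sum_upCovers_dimSYT lam
  have hpos : (0 : ℝ) < (lam.card + 1) * dimSYT lam := by
    have := YoungDiagram.dimSYT_pos lam
    positivity
  simp only [← YoungDiagram.coe_upCovers, finsum_mem_coe_finset]
  refine ⟨hsum, fun _ _ => by positivity, ?_⟩
  rw [← Finset.sum_div, div_eq_one_iff_eq hpos.ne']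
  exact_mod_cast hsum
end
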